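/- arXiv:1305.6600 — 5 statements merged into one kernel-verified Lean document; each statement's English description precedes it below -/
import Mathlib

section
/- Suppose α₁, β₁, γ₁ are smooth real functions of R > 0 and α₂, β₂, γ₂ are smooth real functions of θ, satisfying α₁(R)α₂(θ) + β₁(R)β₂(θ) = γ₁(R)² − γ₂(θ)² for all R, θ. If moreover β₁ and β₂ are nonconstant, then there exist real constants λ ≠ 0, C₁, C₂, C₃ such that α₁ = λβ₁ + C₁, α₂ = −λ⁻¹β₂ + C₂, γ₁² = λC₂β₁ + C₃, and γ₂² = λ⁻¹C₁β₂ − C₁C₂ + C₃. -/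
open Set

/-- separation of variables for `α₁α₂ + β₁β₂ = γ₁² − γ₂²`. -/
theorem stmt3 (α₁ β₁ γ₁ α₂ β₂ γ₂ : ℝ → ℝ)
    (hα₁ : ContDiff ℝ (⊤ : ℕ∞) α₁) (hβ₁ : ContDiff ℝ (⊤ : ℕ∞) β₁) (hγ₁ : ContDiff ℝ (⊤ : ℕ∞) γ₁)
    (hα₂ : ContDiff ℝ (⊤ : ℕ∞) α₂) (hβ₂ : ContDiff ℝ (⊤ : ℕ∞) β₂) (hγ₂ : ContDiff ℝ (⊤ : ℕ∞) γ₂)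
    (heq : ∀ R ∈ Ioi (0 : ℝ), ∀ θ : ℝ,
      α₁ R * α₂ θ + β₁ R * β₂ θ = (γ₁ R) ^ 2 - (γ₂ θ) ^ 2)
    (hβ₁nc : ∃ R₁ ∈ Ioi (0 : ℝ), ∃ R₂ ∈ Ioi (0 : ℝ), β₁ R₁ ≠ β₁ R₂)
    (hβ₂nc : ∃ θ₁ θ₂ : ℝ, β₂ θ₁ ≠ β₂ θ₂) :
    ∃ lam C₁ C₂ C₃ : ℝ, lam ≠ 0 ∧
      (∀ R ∈ Ioi (0 : ℝ), α₁ R = lam * β₁ R + C₁) ∧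
      (∀ θ : ℝ, α₂ θ = -lam⁻¹ * β₂ θ + C₂) ∧
      (∀ R ∈ Ioi (0 : ℝ), (γ₁ R) ^ 2 = lam * C₂ * β₁ R + C₃) ∧
      (∀ θ : ℝ, (γ₂ θ) ^ 2 = lam⁻¹ * C₁ * β₂ θ - C₁ * C₂ + C₃) := by
  obtain ⟨Ra, hRa, Rb, hRb, hβ1⟩ := hβ₁nc
  obtain ⟨θa, θb, hβ2⟩ := hβ₂nc
  have hΔβ₁ : β₁ Ra - β₁ Rb ≠ 0 := sub_ne_zero.mpr hβ1
  have hΔβ₂ : β₂ θa - β₂ θb ≠ 0 := sub_ne_zero.mpr hβ2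
  -- key double-difference identity
  have key : (α₁ Ra - α₁ Rb) * (α₂ θa - α₂ θb)
      + (β₁ Ra - β₁ Rb) * (β₂ θa - β₂ θb) = 0 := by
    linear_combination heq Ra hRa θa - heq Ra hRa θb - heq Rb hRb θa + heq Rb hRb θb
  have hΔα₂ : α₂ θa - α₂ θb ≠ 0 := by
    intro h
    apply mul_ne_zero hΔβ₁ hΔβ₂
    linear_combination key - (α₁ Ra - α₁ Rb) * h
  have hΔα₁ : α₁ Ra - α₁ Rb ≠ 0 := by
    intro h
    apply mul_ne_zero hΔβ₁ hΔβ₂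
    linear_combination key - (α₂ θa - α₂ θb) * h
  set lam : ℝ := -(β₂ θa - β₂ θb) / (α₂ θa - α₂ θb) with hlam
  set C₁ : ℝ := ((γ₂ θb) ^ 2 - (γ₂ θa) ^ 2) / (α₂ θa - α₂ θb) with hC₁
  set mu : ℝ := -(β₁ Ra - β₁ Rb) / (α₁ Ra - α₁ Rb) with hmu
  set C₂ : ℝ := ((γ₁ Ra) ^ 2 - (γ₁ Rb) ^ 2) / (α₁ Ra - α₁ Rb) with hC₂
  clear_value lam C₁ mu C₂
  have hlam0 : lam ≠ 0 := by
    rw [hlam]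
    exact div_ne_zero (neg_ne_zero.mpr hΔβ₂) hΔα₂
  have hlm : lam * mu = -1 := by
    rw [hlam, hmu]
    field_simp
    linear_combination key
  have hmueq : mu = -lam⁻¹ := by
    field_simp
    linear_combination hlm
  have hα₁eq : ∀ R ∈ Ioi (0 : ℝ), α₁ R = lam * β₁ R + C₁ := by
    intro R hR
    rw [hlam, hC₁]
    field_simp
    linear_combination (heq R hR θa - heq R hR θb)
  have hα₂eq : ∀ θ : ℝ, α₂ θ = mu * β₂ θ + C₂ := by
    intro θ
    rw [hmu, hC₂]
    field_simp
    linear_combination (heq Ra hRa θ - heq Rb hRb θ)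
  set C₃ : ℝ := (γ₁ Ra) ^ 2 - lam * C₂ * β₁ Ra with hC₃
  clear_value C₃
  have hinv : lam⁻¹ = -mu := by rw [hmueq]; ring
  have hγ₂eq : ∀ θ : ℝ, (γ₂ θ) ^ 2 = lam⁻¹ * C₁ * β₂ θ - C₁ * C₂ + C₃ := by
    intro θ
    have h := heq Ra hRa θ
    rw [hα₁eq Ra hRa, hα₂eq θ] at h
    rw [hC₃, hinv]
    linear_combination h - β₁ Ra * β₂ θ * hlm
  have hγ₁eq : ∀ R ∈ Ioi (0 : ℝ), (γ₁ R) ^ 2 = lam * C₂ * β₁ R + C₃ := by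
    intro R hR
    have h := heq R hR θa
    rw [hα₁eq R hR, hα₂eq θa] at h
    have h2 := hγ₂eq θa
    rw [hinv] at h2
    linear_combination -h + h2 + β₁ R * β₂ θa * hlm
  exact ⟨lam, C₁, C₂, C₃, hlam0, hα₁eq, fun θ => by rw [hα₂eq θ, hmueq], hγ₁eq, hγ₂eq⟩
end

section
/- With the rank-one immersion Ψ(s,t) = (γ(s), a(s,t)γ' + b(s,t) jγ') in TS² as above, if a(s,t) = a₁(s) + a₂(t) for smooth functions a₁, a₂, then the mean curvature vector H⃗ = ((k b_t − a_{st})/b_t)(0, −b_tγ' + a_t jγ') vanishes identically iff the geodesic curvature k of γ is identically zero, i.e. iff γ is a geodesic of S². -/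
open Complex ComplexConjugate

/-- The round metric `g` in the orthonormal frame `{γ', jγ'}` of `TS²` along `γ`. -/
noncomputable def gR (x y : ℂ) : ℝ := (x * conj y).re

theorem normal_vector_ne_zero {b : ℝ} (hb : b ≠ 0) (c : ℝ) :
    ((0 : ℂ), -(b : ℂ) + (c : ℂ) * I) ≠ 0 := by
  simp [Prod.ext_iff, Complex.ext_iff, hb]

/-- for the rank-one immersion `Ψ(s,t) = (γ(s), aγ' + b jγ')` with separable
`a(s,t) = a₁(s) + a₂(t)` (so `a_{st} = 0`, `a_t(s,t) = a₂'(t)`) and `b_t ≠ 0` everywhere,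
the mean curvature vector `H⃗(s,t) = ((k b_t − a_{st})/b_t)(0, −b_tγ' + a_t jγ')` vanishes
identically iff the geodesic curvature `k` of `γ` vanishes identically, i.e. iff `γ` is a
geodesic of `S²`. -/
theorem stmt7 (k : ℝ → ℝ) (a₂ : ℝ → ℝ) (b_t : ℝ → ℝ → ℝ)
    (hbt : ∀ s t, b_t s t ≠ 0) :
    (∀ s t : ℝ,
      (((k s * b_t s t - 0) / b_t s t : ℝ) •
          (((0 : ℂ), -((b_t s t : ℝ) : ℂ) + ((deriv a₂ t : ℝ) : ℂ) * Complex.I) : ℂ × ℂ))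
        = (0, 0)) ↔ ∀ s : ℝ, k s = 0 := by
  have hcoef : ∀ s t, (k s * b_t s t - 0) / b_t s t = k s := fun s t => by
    rw [sub_zero, mul_div_cancel_right₀ _ (hbt s t)]
  have hnormal : ∀ s t, ((0 : ℂ), -((b_t s t : ℝ) : ℂ) + ((deriv a₂ t : ℝ) : ℂ) * I) ≠ 0 :=
    fun s t => normal_vector_ne_zero (hbt s t) _
  simp only [hcoef, Prod.mk_zero_zero, smul_eq_zero, hnormal, or_false, forall_const]
end

section
/- Let k₁, k₂ : S → ℝ be smooth functions on a surface S with orthonormal principal frame (e₁, e₂), satisfying e₁(k₂)·e₂(k₁) = 0 and e₁(k₁)·e₂(k₂) = 0 identically on a connected S, and suppose k₁ ≠ k₂ everywhere. Then either one of k₁, k₂ is constant, or (e₂(k₁) = 0 and e₂(k₂) = 0 identically) or (e₁(k₂) = 0 and e₁(k₁) = 0 identically). -/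
/-!
Partial derivatives of analytic functions are analytic, and analytic functions on a connected
open set have no zero divisors. So each of the two product identities forces one of its factors
to vanish identically, and the four resulting cases are the four alternatives: if a curvature has
both partial derivatives vanishing it is constant, otherwise two partial derivatives in the same
direction vanish.
-/

section

variable {𝕜 : Type*} [NontriviallyNormedField 𝕜]
  {E : Type*} [NormedAddCommGroup E] [NormedSpace 𝕜 E]
  {F : Type*} [NormedAddCommGroup F] [NormedSpace 𝕜 F]

theorem AnalyticOnNhd.fderiv_apply [CompleteSpace F] {f : E → F} {U : Set E}
    (hf : AnalyticOnNhd 𝕜 f U) (v : E) : AnalyticOnNhd 𝕜 (fun x ↦ fderiv 𝕜 f x v) U :=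
  (ContinuousLinearMap.apply 𝕜 F v).comp_analyticOnNhd hf.fderiv

theorem AnalyticOnNhd.eqOn_zero_or_eqOn_zero_of_mul_eq_zero {f g : E → 𝕜} {U : Set E}
    (hf : AnalyticOnNhd 𝕜 f U) (hg : AnalyticOnNhd 𝕜 g U) (hU : IsOpen U)
    (hU' : IsPreconnected U) (hfg : ∀ x ∈ U, f x * g x = 0) :
    (∀ x ∈ U, f x = 0) ∨ (∀ x ∈ U, g x = 0) := by
  refine or_iff_not_imp_left.2 fun hf0 ↦ ?_
  push Not at hf0
  obtain ⟨x₀, hx₀, hfx₀⟩ := hf0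
  have hg_near : g =ᶠ[nhds x₀] 0 := by
    filter_upwards [(hf x₀ hx₀).continuousAt.eventually_ne hfx₀, hU.mem_nhds hx₀] with y hfy hy
    exact (mul_eq_zero.1 (hfg y hy)).resolve_left hfy
  exact fun x hx ↦ hg.eqOn_zero_of_preconnected_of_eventuallyEq_zero hU' hx₀ hg_near hx

theorem ContinuousLinearMap.eq_zero_of_apply_one_zero_of_apply_zero_one
    {L : 𝕜 × 𝕜 →L[𝕜] F} (h₁ : L (1, 0) = 0) (h₂ : L (0, 1) = 0) : L = 0 := by
  ext <;> simpa

end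

theorem IsOpen.exists_is_const_of_partials_eq_zero {F : Type*} [NormedAddCommGroup F]
    [NormedSpace ℝ F] {f : ℝ × ℝ → F} {U : Set (ℝ × ℝ)}
    (hU : IsOpen U) (hU' : IsPreconnected U) (hf : DifferentiableOn ℝ f U)
    (h₁ : ∀ x ∈ U, fderiv ℝ f x (1, 0) = 0) (h₂ : ∀ x ∈ U, fderiv ℝ f x (0, 1) = 0) :
    ∃ c, ∀ x ∈ U, f x = c :=
  hU.exists_is_const_of_fderiv_eq_zero hU' hf fun x hx ↦
    ContinuousLinearMap.eq_zero_of_apply_one_zero_of_apply_zero_one (h₁ x hx) (h₂ x hx)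

theorem stmt8_general (U : Set (ℝ × ℝ)) (hU : IsOpen U) (hconn : IsConnected U)
    (k₁ k₂ : ℝ × ℝ → ℝ)
    (hk₁ : AnalyticOnNhd ℝ k₁ U) (hk₂ : AnalyticOnNhd ℝ k₂ U)
    (h1 : ∀ x ∈ U, fderiv ℝ k₂ x (1, 0) * fderiv ℝ k₁ x (0, 1) = 0)
    (h2 : ∀ x ∈ U, fderiv ℝ k₁ x (1, 0) * fderiv ℝ k₂ x (0, 1) = 0) :
    (∃ c : ℝ, ∀ x ∈ U, k₁ x = c) ∨ (∃ c : ℝ, ∀ x ∈ U, k₂ x = c) ∨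
    (∀ x ∈ U, fderiv ℝ k₁ x (0, 1) = 0 ∧ fderiv ℝ k₂ x (0, 1) = 0) ∨
    (∀ x ∈ U, fderiv ℝ k₂ x (1, 0) = 0 ∧ fderiv ℝ k₁ x (1, 0) = 0) := by
  have hpre := hconn.isPreconnected
  have const_of {k : ℝ × ℝ → ℝ} (hk : AnalyticOnNhd ℝ k U) :=
    hU.exists_is_const_of_partials_eq_zero hpre hk.differentiableOn
  rcases (hk₂.fderiv_apply (1, 0)).eqOn_zero_or_eqOn_zero_of_mul_eq_zero
      (hk₁.fderiv_apply (0, 1)) hU hpre h1 with h₂₁ | h₁₂ <;>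
    rcases (hk₁.fderiv_apply (1, 0)).eqOn_zero_or_eqOn_zero_of_mul_eq_zero
      (hk₂.fderiv_apply (0, 1)) hU hpre h2 with h₁₁ | h₂₂
  · exact .inr <| .inr <| .inr fun x hx ↦ ⟨h₂₁ x hx, h₁₁ x hx⟩
  · exact .inr <| .inl <| const_of hk₂ h₂₁ h₂₂
  · exact .inl <| const_of hk₁ h₁₁ h₁₂
  · exact .inr <| .inr <| .inl fun x hx ↦ ⟨h₁₂ x hx, h₂₂ x hx⟩

/-- if on a connected open set the (analytic) principal curvature functions
`k₁, k₂` satisfy `e₁(k₂)e₂(k₁) = 0` (marginally trapped) and `e₁(k₁)e₂(k₂) = 0`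
(Weingarten), with `k₁ ≠ k₂` everywhere, then either one of `k₁, k₂` is constant, or
`e₂(k₁) = e₂(k₂) = 0` identically, or `e₁(k₂) = e₁(k₁) = 0` identically.  Here
`e₁, e₂` are the coordinate derivations `fderiv _ (1,0)`, `fderiv _ (0,1)`. -/
theorem stmt8 (U : Set (ℝ × ℝ)) (hU : IsOpen U) (hconn : IsConnected U)
    (k₁ k₂ : ℝ × ℝ → ℝ)
    (hk₁ : AnalyticOnNhd ℝ k₁ U) (hk₂ : AnalyticOnNhd ℝ k₂ U)
    (hne : ∀ x ∈ U, k₁ x ≠ k₂ x)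
    (h1 : ∀ x ∈ U, fderiv ℝ k₂ x (1, 0) * fderiv ℝ k₁ x (0, 1) = 0)
    (h2 : ∀ x ∈ U, fderiv ℝ k₁ x (1, 0) * fderiv ℝ k₂ x (0, 1) = 0) :
    (∃ c : ℝ, ∀ x ∈ U, k₁ x = c) ∨ (∃ c : ℝ, ∀ x ∈ U, k₂ x = c) ∨
    (∀ x ∈ U, fderiv ℝ k₁ x (0, 1) = 0 ∧ fderiv ℝ k₂ x (0, 1) = 0) ∨
    (∀ x ∈ U, fderiv ℝ k₂ x (1, 0) = 0 ∧ fderiv ℝ k₁ x (1, 0) = 0) :=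
  stmt8_general U hU hconn k₁ k₂ hk₁ hk₂ h1 h2
end

section
/- Let μ₂ = μ₂(μ₁, μ̄₁) define a Lagrangian graph with potential h (so ∂h = μ̄₂/(1+μ₁μ̄₂)) and Lagrangian angle φ defined by ∂μ̄₂/(1+μ₁μ̄₂)² = |σ₀| e^{2iφ} with σ₀ ≠ 0. Then the support function r and potential h are related by r = ln|∂h| + h + r₀ for a constant r₀, and σ₀ = ∂²h + (∂h)², so that e^{4iφ} = (∂²h + (∂h)²)/(∂̄²h + (∂̄h)²). -/
open Complex ComplexConjugate

/-- Wirtinger derivative `∂ = ∂/∂μ₁`. -/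
noncomputable def wd (f : ℂ → ℂ) (z : ℂ) : ℂ :=
  (fderiv ℝ f z 1 - Complex.I * fderiv ℝ f z Complex.I) / 2

/-- Wirtinger derivative `∂̄ = ∂/∂μ̄₁`. -/
noncomputable def wdbar (f : ℂ → ℂ) (z : ℂ) : ℂ :=
  (fderiv ℝ f z 1 + Complex.I * fderiv ℝ f z Complex.I) / 2

lemma wdbar_conj (f : ℂ → ℂ) (z : ℂ) :
    wdbar (fun w => conj (f w)) z = conj (wd f z) := by
  have hfun : (fun w => conj (f w)) = (⇑Complex.conjCLE ∘ f) := by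
    funext w; simp [Complex.conjCLE_apply]
  rw [wdbar, wd, hfun, ContinuousLinearEquiv.comp_fderiv]
  simp only [ContinuousLinearMap.coe_comp', Function.comp_apply,
    ContinuousLinearEquiv.coe_coe, Complex.conjCLE_apply, map_div₀, map_sub, map_mul,
    Complex.conj_I, map_ofNat]
  ring

lemma wd_eq_of_hasFDerivAt {f : ℂ → ℂ} {L : ℂ →L[ℝ] ℂ} {z : ℂ}
    (hf : HasFDerivAt f L z) :
    wd f z = (L 1 - Complex.I * L Complex.I) / 2 := by
  rw [wd, hf.fderiv]

lemma stmt9_aux (a b K z : ℂ) (h2 : (1:ℂ) + z * K ≠ 0) :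
    (a - Complex.I * b) / 2 / (1 + z * K) ^ 2 =
    ((K * -((1 + z * K)⁻¹ * (z * a + K * 1) * (1 + z * K)⁻¹) + (1 + z * K)⁻¹ * a) -
      Complex.I * (K * -((1 + z * K)⁻¹ * (z * b + K * Complex.I) * (1 + z * K)⁻¹) +
        (1 + z * K)⁻¹ * b)) / 2 + (K / (1 + z * K)) ^ 2 := by
  field_simp
  linear_combination (-K ^ 2) * Complex.I_sq

/-- for a Lagrangian graph `μ₂ = μ₂(μ₁,μ̄₁)` with potential `h`
(`∂h = μ̄₂/(1+μ₁μ̄₂)`), Lagrangian angle `φ` (`σ₀ = ∂μ̄₂/(1+μ₁μ̄₂)² = |σ₀|e^{2iφ} ≠ 0`) and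
support function `r = ln|μ̄₂/(1+μ₁μ̄₂)| + h + r₀`, one has `r = ln|∂h| + h + r₀`,
`σ₀ = ∂²h + (∂h)²` and `e^{4iφ} = (∂²h + (∂h)²)/(∂̄²h + (∂̄h)²)`. -/
theorem stmt9 (μ₂ : ℂ → ℂ) (hμ₂ : ContDiff ℝ (⊤ : ℕ∞) μ₂)
    (h : ℂ → ℝ) (hh : ContDiff ℝ (⊤ : ℕ∞) h)
    (hpot : ∀ z : ℂ, wd (fun w => (h w : ℂ)) z = conj (μ₂ z) / (1 + z * conj (μ₂ z)))
    (σ₀ : ℂ → ℂ)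
    (hσ₀ : ∀ z : ℂ, σ₀ z = wd (fun w => conj (μ₂ w)) z / (1 + z * conj (μ₂ z)) ^ 2)
    (hσne : ∀ z : ℂ, σ₀ z ≠ 0)
    (φ : ℂ → ℝ)
    (hφ : ∀ z : ℂ, σ₀ z = ((‖σ₀ z‖ : ℝ) : ℂ) * Complex.exp (2 * Complex.I * φ z))
    (r : ℂ → ℝ) (r₀ : ℝ)
    (hr : ∀ z : ℂ,
      r z = Real.log ‖conj (μ₂ z) / (1 + z * conj (μ₂ z))‖ + h z + r₀) :
    (∀ z : ℂ, r z = Real.log ‖wd (fun w => (h w : ℂ)) z‖ + h z + r₀) ∧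
    (∀ z : ℂ, σ₀ z =
      wd (fun w => wd (fun u => (h u : ℂ)) w) z + (wd (fun w => (h w : ℂ)) z) ^ 2) ∧
    (∀ z : ℂ, Complex.exp (4 * Complex.I * φ z) =
      (wd (fun w => wd (fun u => (h u : ℂ)) w) z + (wd (fun w => (h w : ℂ)) z) ^ 2) /
      (wdbar (fun w => wdbar (fun u => (h u : ℂ)) w) z + (wdbar (fun w => (h w : ℂ)) z) ^ 2)) := by
  set c : ℂ → ℂ := fun w => conj (μ₂ w) with hc_def
  have hc_diff : Differentiable ℝ c := by
    have : Differentiable ℝ (⇑Complex.conjCLE ∘ μ₂) :=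
      Complex.conjCLE.differentiable.comp (hμ₂.differentiable (by simp))
    exact this
  have hDne : ∀ z : ℂ, (1 : ℂ) + z * c z ≠ 0 := by
    intro z hz
    apply hσne z
    rw [hσ₀ z]
    have hz' : (1 : ℂ) + z * conj (μ₂ z) = 0 := hz
    rw [hz']
    simp
  have hwd1 : (fun w => wd (fun u => (h u : ℂ)) w) =
      fun w => c w * (1 + w * c w)⁻¹ := by
    funext w; rw [hpot w, div_eq_mul_inv]
  have key2 : ∀ z : ℂ, σ₀ z =
      wd (fun w => wd (fun u => (h u : ℂ)) w) z + (wd (fun w => (h w : ℂ)) z) ^ 2 := by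
    intro z
    have hcz : HasFDerivAt c (fderiv ℝ c z) z := (hc_diff z).hasFDerivAt
    set Lc := fderiv ℝ c z with hLc
    have hD := (hasFDerivAt_const (1 : ℂ) z).add ((hasFDerivAt_id z).mul' hcz)
    have hinv : HasFDerivAt (fun w => ((1 : ℂ) + w * c w)⁻¹)
        ((-(ContinuousLinearMap.mulLeftRight ℝ ℂ ((1 : ℂ) + z * c z)⁻¹) ((1 : ℂ) + z * c z)⁻¹).comp
          ((0 : ℂ →L[ℝ] ℂ) + (id z • Lc + (ContinuousLinearMap.id ℝ ℂ).smulRight (c z)))) z :=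
      (hasFDerivAt_inv' (𝕜 := ℝ) (hDne z)).comp z hD
    have hg := hcz.mul hinv
    have hA : wd (fun w => c w * (1 + w * c w)⁻¹) z =
        ((c z * -((1 + z * c z)⁻¹ * (z * Lc 1 + c z * 1) * (1 + z * c z)⁻¹)
            + (1 + z * c z)⁻¹ * Lc 1) -
          Complex.I * (c z * -((1 + z * c z)⁻¹ * (z * Lc Complex.I + c z * Complex.I)
            * (1 + z * c z)⁻¹) + (1 + z * c z)⁻¹ * Lc Complex.I)) / 2 := by
      rw [wd_eq_of_hasFDerivAt (f := fun w => c w * (1 + w * c w)⁻¹) hg]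
      simp only [ContinuousLinearMap.add_apply, ContinuousLinearMap.smul_apply,
        ContinuousLinearMap.coe_comp', Function.comp_apply, ContinuousLinearMap.neg_apply,
        ContinuousLinearMap.mulLeftRight_apply, ContinuousLinearMap.zero_apply,
        ContinuousLinearMap.id_apply, ContinuousLinearMap.smulRight_apply,
        ContinuousLinearMap.one_apply, id_eq, smul_eq_mul, zero_add]
      ring
    have e1 : wd (fun w => conj (μ₂ w)) z = (Lc 1 - Complex.I * Lc Complex.I) / 2 :=
      wd_eq_of_hasFDerivAt hcz
    rw [hσ₀ z, hwd1, hA, hpot z, e1]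
    exact stmt9_aux (Lc 1) (Lc Complex.I) (c z) z (hDne z)
  refine ⟨fun z => by rw [hr z, hpot z], key2, ?_⟩
  intro z
  have hb1 : ∀ w : ℂ, wdbar (fun u => (h u : ℂ)) w = conj (wd (fun u => (h u : ℂ)) w) := by
    intro w
    have hconjf : (fun u => (h u : ℂ)) = fun u => conj ((h u : ℂ)) := by
      funext u; simp
    conv_lhs => rw [hconjf]
    exact wdbar_conj _ w
  have hb2 : wdbar (fun w => wdbar (fun u => (h u : ℂ)) w) z =
      conj (wd (fun w => wd (fun u => (h u : ℂ)) w) z) := by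
    have hfun : (fun w => wdbar (fun u => (h u : ℂ)) w) =
        fun w => conj (wd (fun u => (h u : ℂ)) w) := funext hb1
    rw [hfun]
    exact wdbar_conj _ z
  have hden : wdbar (fun w => wdbar (fun u => (h u : ℂ)) w) z +
      (wdbar (fun w => (h w : ℂ)) z) ^ 2 = conj (σ₀ z) := by
    rw [hb2, hb1 z, key2 z]
    simp [map_add, map_pow]
  rw [hden, ← key2 z]
  set A : ℝ := ‖σ₀ z‖ with hA
  have habs : (A : ℂ) ≠ 0 := by
    simpa [hA] using (norm_ne_zero_iff.mpr (hσne z))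
  have hcσ : conj (σ₀ z) = (A : ℂ) * Complex.exp (-(2 * Complex.I * φ z)) := by
    rw [hφ z, map_mul, ← Complex.exp_conj,
      show conj (2 * Complex.I * (φ z : ℂ)) = -(2 * Complex.I * (φ z : ℂ)) by
        rw [map_mul, map_mul, Complex.conj_I, Complex.conj_ofReal, map_ofNat]; ring]
    simp [Complex.conj_ofReal, hA]
  rw [hcσ, hφ z, mul_div_mul_left _ _ habs, ← Complex.exp_sub]
  congr 1
  ring
end

section
/- Let h : ℂ → ℝ be of the form h(μ₁, μ̄₁) = f(τμ₁ + τ̄μ̄₁) where f : ℝ → ℝ is smooth and τ ∈ ℂ with |τ| = 1. Then with φ the Lagrangian angle defined by e^{4iφ} = (∂²h + (∂h)²)/(∂̄²h + (∂̄h)²), the function ∂ e^{−iφ+h} is real-valued or imaginary-valued; hence the corresponding Lagrangian surface in 𝕃(ℍ³) is marginally trapped. -/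
open Complex ComplexConjugate

noncomputable def lmap (τ : ℂ) : ℂ →L[ℝ] ℝ :=
  (2:ℝ) • (Complex.reCLM.comp ((ContinuousLinearMap.mul ℝ ℂ) τ))

lemma lmap_apply (τ v : ℂ) : lmap τ v = 2 * (τ * v).re := by
  simp [lmap, ContinuousLinearMap.smul_apply]

lemma keyHasFDeriv {g : ℝ → ℝ} (hg : Differentiable ℝ g) (τ z : ℂ) :
    HasFDerivAt (fun w : ℂ => ((g (2*(τ*w).re) : ℝ) : ℂ))
      (Complex.ofRealCLM.comp ((deriv g (2*(τ*z).re)) • lmap τ)) z := by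
  have h1 : HasFDerivAt (fun w : ℂ => 2*(τ*w).re) (lmap τ) z := by
    have e : (fun w : ℂ => 2*(τ*w).re) = lmap τ := by
      funext v; rw [lmap_apply]
    rw [e]; exact (lmap τ).hasFDerivAt
  have h2 : HasDerivAt g (deriv g (2*(τ*z).re)) (2*(τ*z).re) :=
    (hg _).hasDerivAt
  have h3 := h2.comp_hasFDerivAt z h1
  exact Complex.ofRealCLM.hasFDerivAt.comp z h3

lemma wd_key {g : ℝ → ℝ} (hg : Differentiable ℝ g) (τ z : ℂ) :
    wd (fun w : ℂ => ((g (2*(τ*w).re) : ℝ) : ℂ)) z = ((deriv g (2*(τ*z).re) : ℝ) : ℂ) * τ := by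
  have H := (keyHasFDeriv hg τ z).fderiv
  unfold wd
  rw [H]
  simp only [ContinuousLinearMap.comp_apply, ContinuousLinearMap.smul_apply, lmap_apply,
    Complex.ofRealCLM_apply]
  have h1 : (τ * 1).re = τ.re := by simp
  have h2 : (τ * Complex.I).re = -τ.im := by simp
  rw [h1, h2]
  apply Complex.ext <;> simp <;> ring

lemma wdbar_key {g : ℝ → ℝ} (hg : Differentiable ℝ g) (τ z : ℂ) :
    wdbar (fun w : ℂ => ((g (2*(τ*w).re) : ℝ) : ℂ)) z = ((deriv g (2*(τ*z).re) : ℝ) : ℂ) * (conj τ) := by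
  have H := (keyHasFDeriv hg τ z).fderiv
  unfold wdbar
  rw [H]
  simp only [ContinuousLinearMap.comp_apply, ContinuousLinearMap.smul_apply, lmap_apply,
    Complex.ofRealCLM_apply]
  have h1 : (τ * 1).re = τ.re := by simp
  have h2 : (τ * Complex.I).re = -τ.im := by simp
  rw [h1, h2]
  apply Complex.ext <;> simp <;> ring

lemma wd_const_mul {F : ℂ → ℂ} (hF : DifferentiableAt ℝ F z) (c : ℂ) :
    wd (fun w => c * F w) z = c * wd F z := by
  unfold wd
  rw [fderiv_const_mul hF c]
  simp only [ContinuousLinearMap.smul_apply, smul_eq_mul]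
  ring

lemma wd_mul_const {F : ℂ → ℂ} (hF : DifferentiableAt ℝ F z) (c : ℂ) :
    wd (fun w => F w * c) z = wd F z * c := by
  have e : (fun w => F w * c) = fun w => c * F w := by funext w; ring
  rw [e, wd_const_mul hF c]; ring

lemma wdbar_mul_const {F : ℂ → ℂ} (hF : DifferentiableAt ℝ F z) (c : ℂ) :
    wdbar (fun w => F w * c) z = wdbar F z * c := by
  have e : (fun w => F w * c) = fun w => c * F w := by funext w; ring
  unfold wdbar
  rw [e, fderiv_const_mul hF c]
  simp only [ContinuousLinearMap.smul_apply, smul_eq_mul]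
  ring

lemma wd_cexp_key {g : ℝ → ℝ} (hg : Differentiable ℝ g) (τ z : ℂ) :
    wd (fun w : ℂ => Complex.exp ((g (2*(τ*w).re) : ℝ) : ℂ)) z
      = Complex.exp ((g (2*(τ*z).re) : ℝ) : ℂ) * (((deriv g (2*(τ*z).re) : ℝ) : ℂ) * τ) := by
  have H := ((keyHasFDeriv hg τ z).cexp).fderiv
  unfold wd
  rw [H]
  simp only [ContinuousLinearMap.smul_apply, ContinuousLinearMap.comp_apply,
    ContinuousLinearMap.smul_apply, lmap_apply, Complex.ofRealCLM_apply, smul_eq_mul]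
  have h1 : (τ * 1).re = τ.re := by simp
  have h2 : (τ * Complex.I).re = -τ.im := by simp
  rw [h1, h2]
  apply Complex.ext <;> simp <;> ring

lemma fourth_root {x : ℂ} (hx : x ^ 4 = 1) : x.im = 0 ∨ x.re = 0 := by
  have h2 : (x ^ 2 - 1) * (x ^ 2 + 1) = 0 := by linear_combination hx
  rcases mul_eq_zero.mp h2 with hc | hc
  · have h3 : (x - 1) * (x + 1) = 0 := by linear_combination hc
    rcases mul_eq_zero.mp h3 with hd | hd
    · left; have : x = 1 := by linear_combination hd
      simp [this]
    · left; have : x = -1 := by linear_combination hd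
      simp [this]
  · have h3 : (x - Complex.I) * (x + Complex.I) = 0 := by
      linear_combination hc - Complex.I_sq
    rcases mul_eq_zero.mp h3 with hd | hd
    · right; have : x = Complex.I := by linear_combination hd
      simp [this]
    · right; have : x = -Complex.I := by linear_combination hd
      simp [this]

lemma S_finite : {x : ℂ | x ^ 4 = 1}.Finite := by
  have hp : (Polynomial.X ^ 4 - Polynomial.C 1 : Polynomial ℂ) ≠ 0 := by
    intro h0
    have := congrArg (Polynomial.eval 0) h0
    simp at this
  refine (Polynomial.finite_setOf_isRoot hp).subset ?_
  intro x hx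
  simp only [Set.mem_setOf_eq] at hx ⊢
  simp [Polynomial.IsRoot, hx]


/-- Corollary 1: if the potential is `h(μ₁,μ̄₁) = f(τμ₁ + τ̄μ̄₁)` with `f`
smooth real, `|τ| = 1`, nondegeneracy `f'' + (f')² ≠ 0`, and `φ` a (continuous) Lagrangian
angle with `e^{4iφ} = (∂²h + (∂h)²)/(∂̄²h + (∂̄h)²)`, then `∂e^{−iφ+h}` is real-valued or
imaginary-valued; hence the Lagrangian surface is marginally trapped. -/
theorem stmt10 (f : ℝ → ℝ) (hf : ContDiff ℝ (⊤ : ℕ∞) f)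
    (τ : ℂ) (hτ : ‖τ‖ = 1)
    (h : ℂ → ℝ) (hh : ∀ z : ℂ, h z = f ((τ * z + conj τ * conj z).re))
    (hnd : ∀ x : ℝ, deriv (deriv f) x + (deriv f x) ^ 2 ≠ 0)
    (φ : ℂ → ℝ) (hφc : Continuous φ)
    (hφ : ∀ z : ℂ, Complex.exp (4 * Complex.I * φ z) =
      (wd (fun w => wd (fun u => (h u : ℂ)) w) z + (wd (fun w => (h w : ℂ)) z) ^ 2) /
      (wdbar (fun w => wdbar (fun u => (h u : ℂ)) w) z + (wdbar (fun w => (h w : ℂ)) z) ^ 2)) :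
    (∀ z : ℂ, (wd (fun w => Complex.exp (-Complex.I * φ w + h w)) z).im = 0) ∨
    (∀ z : ℂ, (wd (fun w => Complex.exp (-Complex.I * φ w + h w)) z).re = 0) := by
  -- basic facts
  have hf1 : Differentiable ℝ f := hf.differentiable (by simp)
  have hfinf : ContDiff ℝ ((⊤ : ℕ∞) : WithTop ℕ∞) f := hf.of_le (by simp)
  have hf'c : ContDiff ℝ ((⊤ : ℕ∞) : WithTop ℕ∞) (deriv f) := (contDiff_infty_iff_deriv.mp hfinf).2
  have hf'1 : Differentiable ℝ (deriv f) := hf'c.differentiable (by simp)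
  have hτ0 : τ ≠ 0 := by
    intro e; rw [e] at hτ; simp at hτ
  have hττ : τ * conj τ = 1 := by
    rw [Complex.mul_conj]
    norm_cast
    rw [Complex.normSq_eq_norm_sq, hτ]; norm_num
  -- rewrite h in the canonical form
  have hre : ∀ z : ℂ, (τ * z + conj τ * conj z).re = 2 * (τ * z).re := by
    intro z
    rw [← map_mul]
    simp [Complex.add_re, Complex.conj_re]
    ring
  have hFeq : (fun u : ℂ => ((h u : ℝ) : ℂ)) = fun u => ((f (2 * (τ * u).re) : ℝ) : ℂ) := by
    funext u; rw [hh u, hre u]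
  -- first Wirtinger derivatives
  have wdF : ∀ z : ℂ, wd (fun u => ((h u : ℝ) : ℂ)) z = ((deriv f (2 * (τ * z).re) : ℝ) : ℂ) * τ := by
    intro z; rw [hFeq]; exact wd_key hf1 τ z
  have wdbarF : ∀ z : ℂ, wdbar (fun u => ((h u : ℝ) : ℂ)) z
      = ((deriv f (2 * (τ * z).re) : ℝ) : ℂ) * conj τ := by
    intro z; rw [hFeq]; exact wdbar_key hf1 τ z
  -- second Wirtinger derivatives
  have wdwdF : ∀ z : ℂ, wd (fun w => wd (fun u => ((h u : ℝ) : ℂ)) w) z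
      = ((deriv (deriv f) (2 * (τ * z).re) : ℝ) : ℂ) * τ * τ := by
    intro z
    have e : (fun w => wd (fun u => ((h u : ℝ) : ℂ)) w)
        = fun w => ((deriv f (2 * (τ * w).re) : ℝ) : ℂ) * τ := funext wdF
    rw [e, wd_mul_const (keyHasFDeriv hf'1 τ z).differentiableAt τ, wd_key hf'1 τ z]
  have wdbarwdbarF : ∀ z : ℂ, wdbar (fun w => wdbar (fun u => ((h u : ℝ) : ℂ)) w) z
      = ((deriv (deriv f) (2 * (τ * z).re) : ℝ) : ℂ) * conj τ * conj τ := by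
    intro z
    have e : (fun w => wdbar (fun u => ((h u : ℝ) : ℂ)) w)
        = fun w => ((deriv f (2 * (τ * w).re) : ℝ) : ℂ) * conj τ := funext wdbarF
    rw [e, wdbar_mul_const (keyHasFDeriv hf'1 τ z).differentiableAt (conj τ), wdbar_key hf'1 τ z]
  -- the angle identity
  have key : ∀ z : ℂ, Complex.exp (4 * Complex.I * φ z) = τ ^ 4 := by
    intro z
    rw [hφ z, wdwdF z, wdbarwdbarF z, wdF z, wdbarF z]
    set t := 2 * (τ * z).re
    set σ : ℂ := ((deriv (deriv f) t + (deriv f t) ^ 2 : ℝ) : ℂ) with hσdef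
    have hσ0 : σ ≠ 0 := by
      rw [hσdef]; exact_mod_cast hnd t
    have e1 : ((deriv (deriv f) t : ℝ) : ℂ) * τ * τ + (((deriv f t : ℝ) : ℂ) * τ) ^ 2
        = τ ^ 2 * σ := by rw [hσdef]; push_cast; ring
    have e2 : ((deriv (deriv f) t : ℝ) : ℂ) * conj τ * conj τ
        + (((deriv f t : ℝ) : ℂ) * conj τ) ^ 2 = (conj τ) ^ 2 * σ := by
      rw [hσdef]; push_cast; ring
    rw [e1, e2]
    have hden : (conj τ) ^ 2 * σ ≠ 0 := by
      apply mul_ne_zero (pow_ne_zero _ _) hσ0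
      simpa using hτ0
    rw [div_eq_iff hden]
    linear_combination (-(τ ^ 2 * σ) * (τ * conj τ + 1)) * hττ
  -- the function u is a continuous fourth root of unity, hence constant
  set u : ℂ → ℂ := fun z => Complex.exp (-Complex.I * φ z) * τ with hudef
  have hu4 : ∀ z : ℂ, u z ^ 4 = 1 := by
    intro z
    have e : u z ^ 4 = Complex.exp ((4 : ℕ) * (-Complex.I * φ z)) * τ ^ 4 := by
      rw [Complex.exp_nat_mul]; rw [hudef]; ring
    rw [e]
    have e2 : ((4 : ℕ) : ℂ) * (-Complex.I * φ z) = -(4 * Complex.I * φ z) := by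
      push_cast; ring
    rw [e2, Complex.exp_neg, key z]
    field_simp
  have hu_cont : Continuous u := by
    apply Continuous.mul _ continuous_const
    exact Complex.continuous_exp.comp
      (continuous_const.mul (Complex.continuous_ofReal.comp hφc))
  have hconst : ∀ z : ℂ, u z = u 0 := by
    have hA : IsClosed {z : ℂ | u z = u 0} := isClosed_eq hu_cont continuous_const
    have hAc : {z : ℂ | u z = u 0}ᶜ = u ⁻¹' ({x : ℂ | x ^ 4 = 1} \ {u 0}) := by
      ext z
      simp only [Set.mem_compl_iff, Set.mem_setOf_eq, Set.mem_preimage, Set.mem_diff,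
        Set.mem_singleton_iff]
      exact ⟨fun hne => ⟨hu4 z, hne⟩, fun ⟨_, hne⟩ => hne⟩
    have hAopen : IsOpen {z : ℂ | u z = u 0} := by
      rw [← isClosed_compl_iff, hAc]
      exact ((S_finite.diff).isClosed).preimage hu_cont
    have hclopen : IsClopen {z : ℂ | u z = u 0} := ⟨hA, hAopen⟩
    have := hclopen.eq_univ (s := {z : ℂ | u z = u 0}) ⟨0, rfl⟩
    intro z
    have hz : z ∈ ({z : ℂ | u z = u 0}) := by rw [this]; trivial
    exact hz
  -- exp(-iφ) is the constant (u 0) * conj τ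
  have hexp : ∀ w : ℂ, Complex.exp (-Complex.I * φ w) = u 0 * conj τ := by
    intro w
    have h1 : Complex.exp (-Complex.I * φ w) * τ = u 0 := hconst w
    calc Complex.exp (-Complex.I * φ w)
        = Complex.exp (-Complex.I * φ w) * τ * conj τ := by
          rw [mul_assoc, hττ, mul_one]
    _ = u 0 * conj τ := by rw [h1]
  -- rewrite the target function
  have htarget : (fun w : ℂ => Complex.exp (-Complex.I * φ w + h w))
      = fun w => (u 0 * conj τ) * Complex.exp ((f (2 * (τ * w).re) : ℝ) : ℂ) := by
    funext w
    rw [Complex.exp_add, hexp w, hh w, hre w]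
  -- compute the Wirtinger derivative of the target
  have hval : ∀ z : ℂ, wd (fun w => Complex.exp (-Complex.I * φ w + h w)) z
      = u 0 * ((Real.exp (f (2 * (τ * z).re)) * deriv f (2 * (τ * z).re) : ℝ) : ℂ) := by
    intro z
    rw [htarget, wd_const_mul ((keyHasFDeriv hf1 τ z).cexp).differentiableAt,
      wd_cexp_key hf1 τ z, Complex.ofReal_mul, ← Complex.ofReal_exp]
    linear_combination (u 0 * ((Real.exp (f (2 * (τ * z).re)) : ℝ) : ℂ)
      * ((deriv f (2 * (τ * z).re) : ℝ) : ℂ)) * hττ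
  -- conclude
  rcases fourth_root (hu4 0) with him | hre0
  · left
    intro z
    rw [hval z]
    simp [Complex.mul_im, him]
  · right
    intro z
    rw [hval z]
    simp [Complex.mul_re, hre0]
end
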